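/- In the Clifford algebra Cl(g) of a quadratic Lie algebra g with invariant inner product and orthonormal basis e_a with structure constants f_{abc}, the cubic element γ = −(1/6) f_{abc} x_a x_b x_c satisfies γ² = −(1/48) f_{abc} f_{abc} · 1, a scalar. -/

import Mathlib

open scoped BigOperators
set_option linter.unusedSectionVars false
set_option linter.unusedVariables false
set_option maxHeartbeats 1000000

namespace CliffordCubicAux
variable {n : ℕ}



/-- Shorthand for the Kronecker delta. -/
def dl (a b : Fin n) : ℝ := if a = b then 1 else 0

/-- The contracted structure constants `g_{ab,cd} = f_{abs} f_{cds}`. -/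
def gg (f : Fin n → Fin n → Fin n → ℝ) (a b c d : Fin n) : ℝ := ∑ s, f a b s * f c d s

section Scalar

variable (f : Fin n → Fin n → Fin n → ℝ)
  (h1 : ∀ a b c, f a b c = - f b a c)
  (h2 : ∀ a b c, f a b c = - f a c b)

include h1 h2 in
lemma fcyc (a b c : Fin n) : f a b c = f b c a := by
  rw [h1 a b c, h2 b a c, neg_neg]

include h1 in
lemma gg_anti1 (a b c d : Fin n) : gg f a b c d = - gg f b a c d := by
  simp only [gg, ← Finset.sum_neg_distrib]
  exact Finset.sum_congr rfl fun s _ => by rw [h1 a b s]; ring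

include h1 h2 in
lemma gg_anti2 (a b c d : Fin n) : gg f a b c d = - gg f a b d c := by
  simp only [gg, ← Finset.sum_neg_distrib]
  exact Finset.sum_congr rfl fun s _ => by rw [h1 c d s]; ring

lemma gg_pair (a b c d : Fin n) : gg f a b c d = gg f c d a b :=
  Finset.sum_congr rfl fun s _ => mul_comm _ _

variable (hj : ∀ a b c d, ∑ s, (f a b s * f s c d + f b c s * f s a d + f c a s * f s b d) = 0)

include h1 h2 hj in
lemma gg_jacobi (a b c d : Fin n) :
    gg f a b c d + gg f b c a d + gg f c a b d = 0 := by
  have h := hj a b c d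
  rw [show (∑ s, (f a b s * f s c d + f b c s * f s a d + f c a s * f s b d))
      = gg f a b c d + gg f b c a d + gg f c a b d from ?_] at h
  · exact h
  · simp only [gg, ← Finset.sum_add_distrib]
    refine Finset.sum_congr rfl fun s _ => ?_
    rw [fcyc f h1 h2 s c d, fcyc f h1 h2 s a d, fcyc f h1 h2 s b d]

include h1 h2 hj in
lemma gg_key1 (a p b c : Fin n) :
    gg f p b a c - gg f a b p c = - gg f a p b c := by
  have h := gg_jacobi f h1 h2 hj p b a c
  have h' := gg_anti1 f h1 b a p c
  linarith

include h1 h2 hj in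
lemma gg_key2 (a b c d : Fin n) :
    gg f a d b c = gg f a c b d - gg f a b c d := by
  have h := gg_jacobi f h1 h2 hj a d b c
  have e1 : gg f d b a c = - gg f a c b d := by
    rw [gg_pair f d b a c, gg_anti2 f h1 h2 a c d b]
  have e2 : gg f b a d c = gg f a b c d := by
    have e3 := gg_anti1 f h1 b a d c
    have e4 := gg_anti2 f h1 h2 a b d c
    linarith
  linarith

/-- The doubly contracted tensor `k_{ad} = g_{ab,bd}`. -/
def kk (f : Fin n → Fin n → Fin n → ℝ) (a d : Fin n) : ℝ := ∑ b, gg f a b b d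

include h1 h2 in
lemma kk_symm (a d : Fin n) : kk f a d = kk f d a := by
  refine Finset.sum_congr rfl fun b _ => ?_
  have e1 := gg_pair f a b b d
  have e2 := gg_anti1 f h1 b d a b
  have e3 := gg_anti2 f h1 h2 d b a b
  linarith

include h1 in
lemma kk_trace : ∑ a, kk f a a = -(∑ a, ∑ b, ∑ c, f a b c * f a b c) := by
  simp only [kk, gg, ← Finset.sum_neg_distrib]
  refine Finset.sum_congr rfl fun a _ => Finset.sum_congr rfl fun b _ =>
    Finset.sum_congr rfl fun s _ => ?_
  rw [h1 b a s]; ring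

include h1 h2 in
lemma gg_trace2 (a c : Fin n) : ∑ b, gg f a b c b = - kk f a c := by
  simp only [kk, ← Finset.sum_neg_distrib]
  refine Finset.sum_congr rfl fun b _ => ?_
  rw [gg_anti2 f h1 h2 a b c b]

end Scalar



section Helpers
variable {M : Type*} [AddCommMonoid M]

lemma sum3_in (F : Fin n → Fin n → Fin n → M) :
    ∑ a, ∑ b, ∑ c, F a b c = ∑ b, ∑ c, ∑ a, F a b c := by
  rw [Finset.sum_comm]
  exact Finset.sum_congr rfl fun b _ => Finset.sum_comm

lemma sum5_in (F : Fin n → Fin n → Fin n → Fin n → Fin n → M) :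
    ∑ a, ∑ b, ∑ c, ∑ d, ∑ e, F a b c d e = ∑ b, ∑ c, ∑ d, ∑ e, ∑ a, F a b c d e := by
  rw [Finset.sum_comm]
  refine Finset.sum_congr rfl fun b _ => ?_
  rw [Finset.sum_comm]
  refine Finset.sum_congr rfl fun c _ => ?_
  rw [Finset.sum_comm]
  exact Finset.sum_congr rfl fun d _ => Finset.sum_comm

lemma sum3_swap23 (F : Fin n → Fin n → Fin n → M) :
    ∑ a, ∑ b, ∑ c, F a b c = ∑ a, ∑ c, ∑ b, F a b c :=
  Finset.sum_congr rfl fun _ _ => Finset.sum_comm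

end Helpers



section Alg
variable {A : Type*} [Ring A] [Algebra ℝ A]
  (f : Fin n → Fin n → Fin n → ℝ)
  (X : Fin n → A)
  (hrel : ∀ a b, X a * X b + X b * X a = algebraMap ℝ A (if a = b then 1 else 0))

def DD (f : Fin n → Fin n → Fin n → ℝ) (X : Fin n → A) (a : Fin n) : A :=
  ∑ b, ∑ c, f a b c • (X b * X c)

include hrel in
lemma Xswap (a b : Fin n) : X a * X b = dl a b • (1:A) - X b * X a := by
  have h := hrel a b
  rw [Algebra.algebraMap_eq_smul_one] at h
  have : dl a b • (1:A) = (if a = b then (1:ℝ) else 0) • (1:A) := rfl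
  rw [this]
  linear_combination (norm := abel) h

include hrel in
lemma Xmove2 (b c d : Fin n) :
    X b * (X c * X d) = dl b c • X d - dl b d • X c + X c * X d * X b := by
  rw [← mul_assoc, Xswap X hrel b c, sub_mul, smul_mul_assoc, one_mul,
    mul_assoc, Xswap X hrel b d, mul_sub, mul_smul_comm, mul_one, ← mul_assoc]
  abel

include hrel in
lemma Xmove2' (b c p : Fin n) :
    X b * X c * X p = dl c p • X b - dl b p • X c + X p * (X b * X c) := by
  rw [mul_assoc, Xswap X hrel c p, mul_sub, mul_smul_comm, mul_one,
    ← mul_assoc, Xswap X hrel b p, sub_mul, smul_mul_assoc, one_mul, mul_assoc]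
  abel

variable (h2 : ∀ a b c, f a b c = - f a c b)

include hrel h2 in
lemma L3 (a p : Fin n) :
    DD f X a * X p = X p * DD f X a + (2:ℝ) • ∑ b, f a b p • X b := by
  have step1 : DD f X a * X p = ∑ b, ∑ c, f a b c • (X b * X c * X p) := by
    simp only [DD, Finset.sum_mul, smul_mul_assoc]
  have step2 : DD f X a * X p
      = (∑ b, ∑ c, f a b c • (dl c p • X b)) - (∑ b, ∑ c, f a b c • (dl b p • X c))
        + ∑ b, ∑ c, f a b c • (X p * (X b * X c)) := by
    rw [step1]
    simp only [← Finset.sum_add_distrib, ← Finset.sum_sub_distrib]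
    refine Finset.sum_congr rfl fun b _ => Finset.sum_congr rfl fun c _ => ?_
    rw [Xmove2' X hrel b c p, smul_add, smul_sub]
  have p1 : (∑ b, ∑ c, f a b c • (dl c p • X b)) = ∑ b, f a b p • X b := by
    refine Finset.sum_congr rfl fun b _ => ?_
    simp only [dl, ite_smul, zero_smul, one_smul, smul_ite, smul_zero, Finset.sum_ite_eq', Finset.mem_univ, if_true]
  have p2 : (∑ b, ∑ c, f a b c • (dl b p • X c)) = - ∑ b, f a b p • X b := by
    rw [Finset.sum_comm]
    have : ∀ c : Fin n, (∑ b, f a b c • (dl b p • X c)) = f a p c • X c := by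
      intro c
      simp only [dl, ite_smul, zero_smul, one_smul, smul_ite, smul_zero, Finset.sum_ite_eq', Finset.mem_univ, if_true]
    rw [Finset.sum_congr rfl fun c _ => this c, ← Finset.sum_neg_distrib]
    refine Finset.sum_congr rfl fun c _ => ?_
    rw [h2 a c p, neg_smul, neg_neg]
  have p3 : (∑ b, ∑ c, f a b c • (X p * (X b * X c))) = X p * DD f X a := by
    simp only [DD, Finset.mul_sum, mul_smul_comm]
  rw [step2, p1, p2, p3, sub_neg_eq_add, two_smul]
  abel

include h2 in
lemma L5 (h1 : ∀ a b c, f a b c = - f b a c) (p : Fin n) :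
    (∑ a, ∑ b, f a b p • (X a * X b)) = DD f X p := by
  refine Finset.sum_congr rfl fun a _ => Finset.sum_congr rfl fun b _ => ?_
  rw [show f a b p = f p a b by rw [h1 a b p, h2 b a p, neg_neg, h1 b p a, h2 p b a, neg_neg]]

lemma L4 : (∑ a, ∑ b, ∑ c, f a b c • (X a * X b * X c)) = ∑ a, X a * DD f X a := by
  simp only [DD, Finset.mul_sum, mul_smul_comm, mul_assoc]

include hrel h2 in
lemma LDm (a c d : Fin n) :
    DD f X a * (X c * X d)
      = X c * X d * DD f X a + (2:ℝ) • (∑ b, f a b d • (X c * X b))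
        + (2:ℝ) • (∑ b, f a b c • (X b * X d)) := by
  rw [← mul_assoc, L3 f X hrel h2 a c, add_mul, mul_assoc, L3 f X hrel h2 a d, mul_add]
  simp only [smul_mul_assoc, mul_smul_comm, Finset.sum_mul, Finset.mul_sum, mul_assoc]

include hrel h2 in
lemma L7 (h1 : ∀ a b c, f a b c = - f b a c)
    (hj : ∀ a b c d, ∑ s, (f a b s * f s c d + f b c s * f s a d + f c a s * f s b d) = 0)
    (a p : Fin n) :
    DD f X a * DD f X p
      = DD f X p * DD f X a - (2:ℝ) • ∑ b, ∑ c, gg f a p b c • (X b * X c) := by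
  have e1 : ∀ c d : Fin n, f p c d • (DD f X a * (X c * X d))
      = f p c d • (X c * X d * DD f X a)
        + (∑ b, ((2:ℝ) * (f p c d * f a b d)) • (X c * X b))
        + (∑ b, ((2:ℝ) * (f p c d * f a b c)) • (X b * X d)) := by
    intro c d
    rw [LDm f X hrel h2 a c d, smul_add, smul_add]
    congr 1
    · congr 1
      rw [smul_smul, Finset.smul_sum]
      exact Finset.sum_congr rfl fun b _ => by rw [smul_smul]; congr 1; ring
    · rw [smul_smul, Finset.smul_sum]
      exact Finset.sum_congr rfl fun b _ => by rw [smul_smul]; congr 1; ring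
  have expand : DD f X a * DD f X p = ∑ c, ∑ d, f p c d • (DD f X a * (X c * X d)) := by
    have h : DD f X p = ∑ c, ∑ d, f p c d • (X c * X d) := rfl
    rw [h]
    simp only [Finset.mul_sum, mul_smul_comm]
  calc DD f X a * DD f X p
      = ∑ c, ∑ d, f p c d • (DD f X a * (X c * X d)) := expand
    _ = (∑ c, ∑ d, f p c d • (X c * X d * DD f X a))
        + (∑ c, ∑ d, ∑ b, ((2:ℝ) * (f p c d * f a b d)) • (X c * X b))
        + (∑ c, ∑ d, ∑ b, ((2:ℝ) * (f p c d * f a b c)) • (X b * X d)) := by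
        simp only [← Finset.sum_add_distrib]
        exact Finset.sum_congr rfl fun c _ => Finset.sum_congr rfl fun d _ => e1 c d
    _ = DD f X p * DD f X a
        + (∑ b, ∑ c, ((2:ℝ) * gg f p b a c) • (X b * X c))
        + (∑ b, ∑ c, ((2:ℝ) * (- gg f a b p c)) • (X b * X c)) := by
        congr 1
        · congr 1
          · have h : DD f X p = ∑ c, ∑ d, f p c d • (X c * X d) := rfl
            rw [h, Finset.sum_mul]
            refine Finset.sum_congr rfl fun c _ => ?_
            rw [Finset.sum_mul]
            exact Finset.sum_congr rfl fun d _ => (smul_mul_assoc _ _ _).symm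
          · calc ∑ c, ∑ d, ∑ b, ((2:ℝ) * (f p c d * f a b d)) • (X c * X b)
                = ∑ c, ∑ b, ∑ d, ((2:ℝ) * (f p c d * f a b d)) • (X c * X b) := sum3_swap23 _
              _ = ∑ b, ∑ c, ((2:ℝ) * gg f p b a c) • (X b * X c) := by
                  refine Finset.sum_congr rfl fun c _ => Finset.sum_congr rfl fun b _ => ?_
                  rw [← Finset.sum_smul]
                  congr 1
                  rw [← Finset.mul_sum, gg]
        · calc ∑ c, ∑ d, ∑ b, ((2:ℝ) * (f p c d * f a b c)) • (X b * X d)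
              = ∑ d, ∑ b, ∑ c, ((2:ℝ) * (f p c d * f a b c)) • (X b * X d) := sum3_in _
            _ = ∑ d, ∑ b, ((2:ℝ) * (- gg f a b p d)) • (X b * X d) := by
                refine Finset.sum_congr rfl fun d _ => Finset.sum_congr rfl fun b _ => ?_
                rw [← Finset.sum_smul]
                congr 1
                rw [← Finset.mul_sum]
                congr 1
                rw [gg, ← Finset.sum_neg_distrib]
                exact Finset.sum_congr rfl fun s _ => by rw [h2 p s d]; ring
            _ = ∑ b, ∑ c, ((2:ℝ) * (- gg f a b p c)) • (X b * X c) := Finset.sum_comm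
    _ = DD f X p * DD f X a - (2:ℝ) • ∑ b, ∑ c, gg f a p b c • (X b * X c) := by
        rw [add_assoc, sub_eq_add_neg]
        congr 1
        calc (∑ b, ∑ c, ((2:ℝ) * gg f p b a c) • (X b * X c))
              + (∑ b, ∑ c, ((2:ℝ) * (- gg f a b p c)) • (X b * X c))
            = ∑ b, ∑ c, (((2:ℝ) * gg f p b a c) + (2:ℝ) * (- gg f a b p c)) • (X b * X c) := by
              simp only [← Finset.sum_add_distrib, ← add_smul]
          _ = ∑ b, ∑ c, -(((2:ℝ)) * gg f a p b c) • (X b * X c) := by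
              refine Finset.sum_congr rfl fun b _ => Finset.sum_congr rfl fun c _ => ?_
              congr 1
              have h := gg_key1 f h1 h2 hj a p b c
              linarith
          _ = - ((2:ℝ) • ∑ b, ∑ c, gg f a p b c • (X b * X c)) := by
              simp only [Finset.smul_sum, smul_smul, neg_smul, ← Finset.sum_neg_distrib]

/-- The quartic element `M = g_{ab,cd} x_a x_b x_c x_d`. -/
def MM (f : Fin n → Fin n → Fin n → ℝ) (X : Fin n → A) : A :=
  ∑ a, ∑ b, ∑ c, ∑ d, gg f a b c d • (X a * X b * (X c * X d))

include h2 in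
lemma L8 (h1 : ∀ a b c, f a b c = - f b a c) :
    ∑ a, DD f X a * DD f X a = MM f X := by
  have e : ∀ a : Fin n, DD f X a * DD f X a
      = ∑ b, ∑ c, ∑ d, ∑ e, (f a b c * f a d e) • (X b * X c * (X d * X e)) := by
    intro a
    have h : DD f X a = ∑ b, ∑ c, f a b c • (X b * X c) := rfl
    rw [h, Finset.sum_mul]
    refine Finset.sum_congr rfl fun b _ => ?_
    rw [Finset.sum_mul]
    refine Finset.sum_congr rfl fun c _ => ?_
    rw [smul_mul_assoc, Finset.mul_sum, Finset.smul_sum]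
    refine Finset.sum_congr rfl fun d _ => ?_
    rw [Finset.mul_sum, Finset.smul_sum]
    exact Finset.sum_congr rfl fun e _ => by rw [mul_smul_comm, smul_smul]
  calc ∑ a, DD f X a * DD f X a
      = ∑ a, ∑ b, ∑ c, ∑ d, ∑ e, (f a b c * f a d e) • (X b * X c * (X d * X e)) :=
        Finset.sum_congr rfl fun a _ => e a
    _ = ∑ b, ∑ c, ∑ d, ∑ e, ∑ a, (f a b c * f a d e) • (X b * X c * (X d * X e)) := sum5_in _
    _ = MM f X := by
        show _ = ∑ a, ∑ b, ∑ c, ∑ d, gg f a b c d • (X a * X b * (X c * X d))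
        refine Finset.sum_congr rfl fun b _ => Finset.sum_congr rfl fun c _ =>
          Finset.sum_congr rfl fun d _ => Finset.sum_congr rfl fun e _ => ?_
        rw [← Finset.sum_smul]
        congr 1
        rw [gg]
        exact Finset.sum_congr rfl fun s _ => by
          rw [fcyc f h1 h2 s b c, fcyc f h1 h2 s d e]

/-- `K = k_{ac} x_a x_c`. -/
def KK (f : Fin n → Fin n → Fin n → ℝ) (X : Fin n → A) : A :=
  ∑ a, ∑ c, kk f a c • (X a * X c)

def NN (f : Fin n → Fin n → Fin n → ℝ) (X : Fin n → A) : A :=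
  ∑ a, ∑ b, ∑ c, ∑ d, gg f a b c d • (X a * (X c * X d * X b))

def PP (f : Fin n → Fin n → Fin n → ℝ) (X : Fin n → A) : A :=
  ∑ a, ∑ b, ∑ c, ∑ d, gg f a c b d • (X a * X b * (X c * X d))

include hrel h2 in
lemma LK (h1 : ∀ a b c, f a b c = - f b a c) :
    (2:ℝ) • KK f X = algebraMap ℝ A (∑ a, kk f a a) := by
  have hK : KK f X = ∑ a, ∑ c, kk f a c • (X a * X c) := rfl
  have sw : KK f X = ∑ a, ∑ c, kk f a c • (X c * X a) := by
    calc KK f X = ∑ c, ∑ a, kk f a c • (X a * X c) := Finset.sum_comm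
      _ = ∑ a, ∑ c, kk f a c • (X c * X a) := by
          refine Finset.sum_congr rfl fun a _ => Finset.sum_congr rfl fun c _ => ?_
          rw [kk_symm f h1 h2 c a]
  have comb : (2:ℝ) • KK f X = ∑ a, ∑ c, kk f a c • (X a * X c + X c * X a) := by
    rw [two_smul]
    nth_rewrite 1 [hK]
    nth_rewrite 1 [sw]
    simp only [← Finset.sum_add_distrib, ← smul_add]
  rw [comb]
  have e : ∀ a c : Fin n, kk f a c • (X a * X c + X c * X a)
      = algebraMap ℝ A (kk f a c * (if a = c then 1 else 0)) := by
    intro a c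
    rw [hrel a c, Algebra.smul_def, ← map_mul]
  calc ∑ a, ∑ c, kk f a c • (X a * X c + X c * X a)
      = ∑ a, ∑ c, algebraMap ℝ A (kk f a c * (if a = c then 1 else 0)) :=
        Finset.sum_congr rfl fun a _ => Finset.sum_congr rfl fun c _ => e a c
    _ = algebraMap ℝ A (∑ a, ∑ c, kk f a c * (if a = c then 1 else 0)) := by
        simp only [← map_sum]
    _ = algebraMap ℝ A (∑ a, kk f a a) := by
        congr 1
        refine Finset.sum_congr rfl fun a _ => ?_
        simp [mul_ite, Finset.sum_ite_eq]

include hrel h2 in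
lemma LM1 (h1 : ∀ a b c, f a b c = - f b a c) :
    MM f X = (2:ℝ) • KK f X + NN f X := by
  have e1 : ∀ a b c d : Fin n, gg f a b c d • (X a * X b * (X c * X d))
      = (gg f a b c d * dl b c) • (X a * X d) - (gg f a b c d * dl b d) • (X a * X c)
        + gg f a b c d • (X a * (X c * X d * X b)) := by
    intro a b c d
    rw [mul_assoc, Xmove2 X hrel b c d, mul_add, mul_sub, mul_smul_comm, mul_smul_comm,
      smul_add, smul_sub, smul_smul, smul_smul]
  have hT1 : (∑ a, ∑ b, ∑ c, ∑ d, (gg f a b c d * dl b c) • (X a * X d)) = KK f X := by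
    calc ∑ a, ∑ b, ∑ c, ∑ d, (gg f a b c d * dl b c) • (X a * X d)
        = ∑ a, ∑ b, ∑ d, ∑ c, (gg f a b c d * dl b c) • (X a * X d) :=
          Finset.sum_congr rfl fun a _ => Finset.sum_congr rfl fun b _ => Finset.sum_comm
      _ = ∑ a, ∑ b, ∑ d, gg f a b b d • (X a * X d) := by
          refine Finset.sum_congr rfl fun a _ => Finset.sum_congr rfl fun b _ =>
            Finset.sum_congr rfl fun d _ => ?_
          simp only [dl, mul_ite, mul_one, mul_zero, ite_smul, zero_smul,
            Finset.sum_ite_eq, Finset.mem_univ, if_true]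
      _ = ∑ a, ∑ d, ∑ b, gg f a b b d • (X a * X d) :=
          Finset.sum_congr rfl fun a _ => Finset.sum_comm
      _ = KK f X := by
          refine Finset.sum_congr rfl fun a _ => Finset.sum_congr rfl fun d _ => ?_
          rw [← Finset.sum_smul]
          rfl
  have hT2 : (∑ a, ∑ b, ∑ c, ∑ d, (gg f a b c d * dl b d) • (X a * X c)) = - KK f X := by
    calc ∑ a, ∑ b, ∑ c, ∑ d, (gg f a b c d * dl b d) • (X a * X c)
        = ∑ a, ∑ b, ∑ c, gg f a b c b • (X a * X c) := by
          refine Finset.sum_congr rfl fun a _ => Finset.sum_congr rfl fun b _ =>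
            Finset.sum_congr rfl fun c _ => ?_
          simp only [dl, mul_ite, mul_one, mul_zero, ite_smul, zero_smul,
            Finset.sum_ite_eq, Finset.mem_univ, if_true]
      _ = ∑ a, ∑ c, ∑ b, gg f a b c b • (X a * X c) :=
          Finset.sum_congr rfl fun a _ => Finset.sum_comm
      _ = - KK f X := by
          rw [show - KK f X = ∑ a, ∑ c, -(kk f a c • (X a * X c)) from by
            simp only [Finset.sum_neg_distrib]; rfl]
          refine Finset.sum_congr rfl fun a _ => Finset.sum_congr rfl fun c _ => ?_
          rw [← Finset.sum_smul, gg_trace2 f h1 h2 a c, neg_smul]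
  calc MM f X
      = ∑ a, ∑ b, ∑ c, ∑ d, ((gg f a b c d * dl b c) • (X a * X d)
          - (gg f a b c d * dl b d) • (X a * X c)
          + gg f a b c d • (X a * (X c * X d * X b))) := by
        refine Finset.sum_congr rfl fun a _ => Finset.sum_congr rfl fun b _ =>
          Finset.sum_congr rfl fun c _ => Finset.sum_congr rfl fun d _ => e1 a b c d
    _ = (∑ a, ∑ b, ∑ c, ∑ d, (gg f a b c d * dl b c) • (X a * X d))
        - (∑ a, ∑ b, ∑ c, ∑ d, (gg f a b c d * dl b d) • (X a * X c))
        + NN f X := by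
        simp only [Finset.sum_add_distrib, Finset.sum_sub_distrib]
        rfl
    _ = (2:ℝ) • KK f X + NN f X := by
        rw [hT1, hT2, sub_neg_eq_add, two_smul]

include h2 in
lemma LM2 (h1 : ∀ a b c, f a b c = - f b a c)
    (hj : ∀ a b c d, ∑ s, (f a b s * f s c d + f b c s * f s a d + f c a s * f s b d) = 0) :
    NN f X = PP f X - MM f X := by
  have step1 : NN f X = ∑ a, ∑ b, ∑ c, ∑ d, gg f a b c d • (X a * X c * (X d * X b)) := by
    refine Finset.sum_congr rfl fun a _ => Finset.sum_congr rfl fun b _ =>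
      Finset.sum_congr rfl fun c _ => Finset.sum_congr rfl fun d _ => ?_
    congr 1
    simp only [mul_assoc]
  have step2 : (∑ a, ∑ b, ∑ c, ∑ d, gg f a b c d • (X a * X c * (X d * X b)))
      = ∑ a, ∑ b, ∑ c, ∑ d, gg f a d b c • (X a * X b * (X c * X d)) :=
    Finset.sum_congr rfl fun a _ => sum3_in _
  rw [step1, step2]
  calc ∑ a, ∑ b, ∑ c, ∑ d, gg f a d b c • (X a * X b * (X c * X d))
      = ∑ a, ∑ b, ∑ c, ∑ d, (gg f a c b d • (X a * X b * (X c * X d))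
          - gg f a b c d • (X a * X b * (X c * X d))) := by
        refine Finset.sum_congr rfl fun a _ => Finset.sum_congr rfl fun b _ =>
          Finset.sum_congr rfl fun c _ => Finset.sum_congr rfl fun d _ => ?_
        rw [gg_key2 f h1 h2 hj a b c d, sub_smul]
    _ = PP f X - MM f X := by
        simp only [Finset.sum_sub_distrib]
        rfl

include hrel h2 in
lemma LM3 (h1 : ∀ a b c, f a b c = - f b a c) :
    PP f X = KK f X - MM f X := by
  have e2 : ∀ a b c d : Fin n, gg f a c b d • (X a * X b * (X c * X d))
      = (gg f a c b d * dl b c) • (X a * X d)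
        - gg f a c b d • (X a * X c * (X b * X d)) := by
    intro a b c d
    have assoc1 : X a * X b * (X c * X d)
        = dl b c • (X a * X d) - X a * X c * (X b * X d) := by
      rw [mul_assoc, ← mul_assoc (X b), Xswap X hrel b c, sub_mul, smul_mul_assoc, one_mul,
        mul_sub, mul_smul_comm]
      congr 1
      simp only [mul_assoc]
    rw [assoc1, smul_sub, smul_smul]
  have hT1 : (∑ a, ∑ b, ∑ c, ∑ d, (gg f a c b d * dl b c) • (X a * X d)) = KK f X := by
    calc ∑ a, ∑ b, ∑ c, ∑ d, (gg f a c b d * dl b c) • (X a * X d)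
        = ∑ a, ∑ b, ∑ d, ∑ c, (gg f a c b d * dl b c) • (X a * X d) :=
          Finset.sum_congr rfl fun a _ => Finset.sum_congr rfl fun b _ => Finset.sum_comm
      _ = ∑ a, ∑ b, ∑ d, gg f a b b d • (X a * X d) := by
          refine Finset.sum_congr rfl fun a _ => Finset.sum_congr rfl fun b _ =>
            Finset.sum_congr rfl fun d _ => ?_
          simp only [dl, mul_ite, mul_one, mul_zero, ite_smul, zero_smul,
            Finset.sum_ite_eq, Finset.mem_univ, if_true]
      _ = ∑ a, ∑ d, ∑ b, gg f a b b d • (X a * X d) :=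
          Finset.sum_congr rfl fun a _ => Finset.sum_comm
      _ = KK f X := by
          refine Finset.sum_congr rfl fun a _ => Finset.sum_congr rfl fun d _ => ?_
          rw [← Finset.sum_smul]
          rfl
  have hT2 : (∑ a, ∑ b, ∑ c, ∑ d, gg f a c b d • (X a * X c * (X b * X d))) = MM f X := by
    calc ∑ a, ∑ b, ∑ c, ∑ d, gg f a c b d • (X a * X c * (X b * X d))
        = ∑ a, ∑ c, ∑ b, ∑ d, gg f a c b d • (X a * X c * (X b * X d)) :=
          Finset.sum_congr rfl fun a _ => Finset.sum_comm
      _ = MM f X := rfl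
  calc PP f X
      = ∑ a, ∑ b, ∑ c, ∑ d, ((gg f a c b d * dl b c) • (X a * X d)
          - gg f a c b d • (X a * X c * (X b * X d))) := by
        refine Finset.sum_congr rfl fun a _ => Finset.sum_congr rfl fun b _ =>
          Finset.sum_congr rfl fun c _ => Finset.sum_congr rfl fun d _ => e2 a b c d
    _ = (∑ a, ∑ b, ∑ c, ∑ d, (gg f a c b d * dl b c) • (X a * X d))
        - (∑ a, ∑ b, ∑ c, ∑ d, gg f a c b d • (X a * X c * (X b * X d))) := by
        simp only [Finset.sum_sub_distrib]
    _ = KK f X - MM f X := by rw [hT1, hT2]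

include hrel h2 in
lemma LMeq (h1 : ∀ a b c, f a b c = - f b a c)
    (hj : ∀ a b c d, ∑ s, (f a b s * f s c d + f b c s * f s a d + f c a s * f s b d) = 0) :
    MM f X = KK f X := by
  have e : MM f X + MM f X + MM f X = KK f X + KK f X + KK f X := by
    nth_rewrite 1 [LM1 f X hrel h2 h1]
    rw [LM2 f X h2 h1 hj, LM3 f X hrel h2 h1, two_smul]
    abel
  calc MM f X = (1/3 : ℝ) • (MM f X + MM f X + MM f X) := by
        rw [show MM f X + MM f X + MM f X
            = ((1:ℝ)+1+1) • MM f X from by rw [add_smul, add_smul, one_smul]]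
        rw [smul_smul]
        norm_num
    _ = (1/3 : ℝ) • (KK f X + KK f X + KK f X) := by rw [e]
    _ = KK f X := by
        rw [show KK f X + KK f X + KK f X
            = ((1:ℝ)+1+1) • KK f X from by rw [add_smul, add_smul, one_smul]]
        rw [smul_smul]
        norm_num

include hrel h2 in
lemma Tsq (h1 : ∀ a b c, f a b c = - f b a c)
    (hj : ∀ a b c d, ∑ s, (f a b s * f s c d + f b c s * f s a d + f c a s * f s b d) = 0) :
    (∑ a, ∑ b, ∑ c, f a b c • (X a * X b * X c))
      * (∑ a, ∑ b, ∑ c, f a b c • (X a * X b * X c))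
      = algebraMap ℝ A ((-(3:ℝ)/4) * (∑ a, ∑ b, ∑ c, f a b c * f a b c)) := by
  set T : A := ∑ a, ∑ b, ∑ c, f a b c • (X a * X b * X c) with hT
  set S1 : A := ∑ a, ∑ p, X a * X p * (DD f X a * DD f X p) with hS1
  -- Step A : T*T = S1 + 2 • MM
  have eA : T * T = S1 + (2:ℝ) • MM f X := by
    have e : ∀ a p : Fin n, (X a * DD f X a) * (X p * DD f X p)
        = X a * X p * (DD f X a * DD f X p)
          + ∑ b, ((2:ℝ) * f a b p) • (X a * X b * DD f X p) := by
      intro a p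
      have h0 : (X a * DD f X a) * (X p * DD f X p)
          = X a * ((DD f X a * X p) * DD f X p) := by
        simp only [mul_assoc]
      rw [h0, L3 f X hrel h2 a p, add_mul, mul_add]
      congr 1
      · simp only [mul_assoc]
      · rw [smul_mul_assoc, mul_smul_comm, Finset.sum_mul, Finset.mul_sum, Finset.smul_sum]
        refine Finset.sum_congr rfl fun b _ => ?_
        rw [smul_mul_assoc, mul_smul_comm, smul_smul, ← mul_assoc]
    have expand : T * T = ∑ a, ∑ p, (X a * DD f X a) * (X p * DD f X p) := by
      rw [hT, L4 f X, Finset.sum_mul]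
      exact Finset.sum_congr rfl fun a _ => Finset.mul_sum _ _ _
    have second : ∀ p : Fin n,
        (∑ a, ∑ b, ((2:ℝ) * f a b p) • (X a * X b * DD f X p))
          = (2:ℝ) • (DD f X p * DD f X p) := by
      intro p
      calc ∑ a, ∑ b, ((2:ℝ) * f a b p) • (X a * X b * DD f X p)
          = (2:ℝ) • ((∑ a, ∑ b, f a b p • (X a * X b)) * DD f X p) := by
            rw [Finset.sum_mul, Finset.smul_sum]
            refine Finset.sum_congr rfl fun a _ => ?_
            rw [Finset.sum_mul, Finset.smul_sum]
            refine Finset.sum_congr rfl fun b _ => ?_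
            rw [smul_mul_assoc, smul_smul]
        _ = (2:ℝ) • (DD f X p * DD f X p) := by rw [L5 f X h2 h1 p]
    calc T * T
        = ∑ a, ∑ p, (X a * DD f X a) * (X p * DD f X p) := expand
      _ = ∑ a, ∑ p, (X a * X p * (DD f X a * DD f X p)
            + ∑ b, ((2:ℝ) * f a b p) • (X a * X b * DD f X p)) :=
          Finset.sum_congr rfl fun a _ => Finset.sum_congr rfl fun p _ => e a p
      _ = S1 + ∑ a, ∑ p, ∑ b, ((2:ℝ) * f a b p) • (X a * X b * DD f X p) := by
          simp only [Finset.sum_add_distrib]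
          rfl
      _ = S1 + ∑ p, ∑ a, ∑ b, ((2:ℝ) * f a b p) • (X a * X b * DD f X p) := by
          rw [add_left_cancel_iff]
          exact Finset.sum_comm
      _ = S1 + ∑ p, (2:ℝ) • (DD f X p * DD f X p) := by
          rw [add_left_cancel_iff]
          exact Finset.sum_congr rfl fun p _ => second p
      _ = S1 + (2:ℝ) • MM f X := by
          rw [← Finset.smul_sum, L8 f X h2 h1]
  -- Step B : S1 = MM - (S1 + 2 • MM)
  have eB : S1 = MM f X - (S1 + (2:ℝ) • MM f X) := by
    have split : S1 = (∑ a, ∑ p, (dl a p) • (DD f X a * DD f X p))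
        - ∑ a, ∑ p, X p * X a * (DD f X a * DD f X p) := by
      rw [hS1, ← Finset.sum_sub_distrib]
      refine Finset.sum_congr rfl fun a _ => ?_
      rw [← Finset.sum_sub_distrib]
      refine Finset.sum_congr rfl fun p _ => ?_
      rw [Xswap X hrel a p, sub_mul, smul_mul_assoc, one_mul]
    have first : (∑ a, ∑ p, (dl a p) • (DD f X a * DD f X p)) = MM f X := by
      rw [← L8 f X h2 h1]
      refine Finset.sum_congr rfl fun a _ => ?_
      simp only [dl, ite_smul, zero_smul, Finset.sum_ite_eq, Finset.mem_univ, if_true, one_smul]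
    have eY : (∑ a, ∑ p, X p * X a * (DD f X a * DD f X p)) = S1 + (2:ℝ) • MM f X := by
      have hneg : (∑ a, ∑ p, ∑ b, ∑ c, gg f p a b c • ((2:ℝ) • (X a * X p * (X b * X c))))
          = - ((2:ℝ) • MM f X) := by
        calc ∑ a, ∑ p, ∑ b, ∑ c, gg f p a b c • ((2:ℝ) • (X a * X p * (X b * X c)))
            = ∑ a, ∑ p, ∑ b, ∑ c, -((2:ℝ) • (gg f a p b c • (X a * X p * (X b * X c)))) := by
              refine Finset.sum_congr rfl fun a _ => Finset.sum_congr rfl fun p _ =>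
                Finset.sum_congr rfl fun b _ => Finset.sum_congr rfl fun c _ => ?_
              rw [gg_anti1 f h1 p a b c, neg_smul, smul_comm]
          _ = - ((2:ℝ) • MM f X) := by
              simp only [Finset.sum_neg_distrib, ← Finset.smul_sum]
              rfl
      calc ∑ a, ∑ p, X p * X a * (DD f X a * DD f X p)
          = ∑ a, ∑ p, X a * X p * (DD f X p * DD f X a) := Finset.sum_comm
        _ = ∑ a, ∑ p, (X a * X p * (DD f X a * DD f X p)
              - ∑ b, ∑ c, gg f p a b c • ((2:ℝ) • (X a * X p * (X b * X c)))) := by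
            refine Finset.sum_congr rfl fun a _ => Finset.sum_congr rfl fun p _ => ?_
            rw [L7 f X hrel h2 h1 hj p a, mul_sub]
            congr 1
            rw [mul_smul_comm, Finset.mul_sum, Finset.smul_sum]
            refine Finset.sum_congr rfl fun b _ => ?_
            rw [Finset.mul_sum, Finset.smul_sum]
            refine Finset.sum_congr rfl fun c _ => ?_
            rw [mul_smul_comm, smul_comm]
        _ = S1 - ∑ a, ∑ p, ∑ b, ∑ c, gg f p a b c • ((2:ℝ) • (X a * X p * (X b * X c))) := by
            simp only [Finset.sum_sub_distrib]
            rfl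
        _ = S1 + (2:ℝ) • MM f X := by
            rw [hneg, sub_neg_eq_add]
    calc S1 = (∑ a, ∑ p, (dl a p) • (DD f X a * DD f X p))
          - ∑ a, ∑ p, X p * X a * (DD f X a * DD f X p) := split
      _ = MM f X - (S1 + (2:ℝ) • MM f X) := by rw [first, eY]
  -- endgame
  have key : S1 + S1 + MM f X = 0 := by
    have h' : S1 + (S1 + (2:ℝ) • MM f X) = MM f X := eq_sub_iff_add_eq.mp eB
    have h'' : S1 + (S1 + ((2:ℝ) • MM f X)) - MM f X = 0 := by
      rw [h']; exact sub_self _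
    calc S1 + S1 + MM f X
        = S1 + (S1 + ((2:ℝ) • MM f X)) - MM f X := by rw [two_smul ℝ (MM f X)]; abel
      _ = 0 := h''
  have sum2 : T * T + T * T = (3:ℝ) • KK f X := by
    rw [eA]
    calc (S1 + (2:ℝ) • MM f X) + (S1 + (2:ℝ) • MM f X)
        = (S1 + S1 + MM f X) + (MM f X + MM f X + MM f X) := by
          rw [two_smul ℝ (MM f X)]; abel
      _ = MM f X + MM f X + MM f X := by rw [key, zero_add]
      _ = ((1:ℝ)+1+1) • MM f X := by rw [add_smul, add_smul, one_smul]
      _ = (3:ℝ) • KK f X := by rw [LMeq f X hrel h2 h1 hj]; norm_num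
  have tt : T * T = (3/4:ℝ) • ((2:ℝ) • KK f X) := by
    calc T * T = (1/2:ℝ) • (T * T + T * T) := by
          rw [show T * T + T * T = (2:ℝ) • (T * T) from (two_smul ℝ _).symm, smul_smul]
          norm_num
      _ = (1/2:ℝ) • ((3:ℝ) • KK f X) := by rw [sum2]
      _ = (3/4:ℝ) • ((2:ℝ) • KK f X) := by rw [smul_smul, smul_smul]; norm_num
  rw [tt, LK f X hrel h2 h1, Algebra.smul_def, ← map_mul]
  congr 1
  rw [kk_trace f h1]
  ring

end Alg

end CliffordCubicAux

open scoped BigOperators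

theorem clifford_cubic_element_square_scalar (n : ℕ)
    (f : Fin n → Fin n → Fin n → ℝ)
    (hanti₁ : ∀ a b c, f a b c = - f b a c)
    (hanti₂ : ∀ a b c, f a b c = - f a c b)
    (hjacobi : ∀ a b c d, ∑ s, (f a b s * f s c d + f b c s * f s a d + f c a s * f s b d) = 0)
    (Q : QuadraticForm ℝ (Fin n → ℝ))
    (hQ : Q = QuadraticMap.weightedSumSquares ℝ (fun _ : Fin n => (1/2 : ℝ)))
    (x : Fin n → CliffordAlgebra Q)
    (hx : ∀ a, x a = CliffordAlgebra.ι Q (Pi.single a (1 : ℝ)))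
    (γ : CliffordAlgebra Q)
    (hγ : γ = (-(1/6 : ℝ)) • ∑ a, ∑ b, ∑ c, f a b c • (x a * x b * x c)) :
    γ * γ = algebraMap ℝ (CliffordAlgebra Q) (-(1/48) * ∑ a, ∑ b, ∑ c, f a b c * f a b c) := by
  classical
  have hrel : ∀ a b, x a * x b + x b * x a
      = algebraMap ℝ (CliffordAlgebra Q) (if a = b then 1 else 0) := by
    intro a b
    rw [hx a, hx b, CliffordAlgebra.ι_mul_ι_add_swap]
    congr 1
    rw [hQ]
    simp only [QuadraticMap.polar, QuadraticMap.weightedSumSquares_apply]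
    rw [← Finset.sum_sub_distrib, ← Finset.sum_sub_distrib]
    trans (∑ i : Fin n, (Pi.single a (1:ℝ) : Fin n → ℝ) i * (Pi.single b (1:ℝ) : Fin n → ℝ) i)
    · refine Finset.sum_congr rfl fun i _ => ?_
      simp only [Pi.add_apply, smul_eq_mul]
      ring
    simp only [Pi.single_apply, ite_mul, one_mul, zero_mul]
    rw [Finset.sum_ite_eq' Finset.univ a (fun i => if i = b then (1:ℝ) else 0)]
    simp
  have h := CliffordCubicAux.Tsq f x hrel hanti₂ hanti₁ hjacobi
  rw [hγ]
  calc ((-(1/6 : ℝ)) • ∑ a, ∑ b, ∑ c, f a b c • (x a * x b * x c))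
        * ((-(1/6 : ℝ)) • ∑ a, ∑ b, ∑ c, f a b c • (x a * x b * x c))
      = ((-(1/6:ℝ)) * (-(1/6:ℝ)))
          • ((∑ a, ∑ b, ∑ c, f a b c • (x a * x b * x c))
            * (∑ a, ∑ b, ∑ c, f a b c • (x a * x b * x c))) := by
        rw [smul_mul_assoc, mul_smul_comm, smul_smul]
    _ = ((-(1/6:ℝ)) * (-(1/6:ℝ)))
          • algebraMap ℝ (CliffordAlgebra Q)
            ((-(3:ℝ)/4) * (∑ a, ∑ b, ∑ c, f a b c * f a b c)) := by rw [h]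
    _ = algebraMap ℝ (CliffordAlgebra Q)
          (-(1/48) * ∑ a, ∑ b, ∑ c, f a b c * f a b c) := by
        rw [Algebra.smul_def, ← map_mul]
        congr 1
        ring
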